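/- (Quantum state distinguishability via the single-qubit Hamiltonian.) Let θ ∈ ℝ be the QET-optimal angle, i.e. cos 2θ = (h²+2k²)/√((h²+2k²)² + (hk)²) and sin 2θ = hk/√((h²+2k²)² + (hk)²). Then for every μ ∈ {−1,+1}: Tr[ρ(μ,μ,θ)·H₂] > 0 (faithful case) and Tr[ρ(μ,−μ,θ)·H₂] < 0 (non-faithful case). -/

import Mathlib

open Matrix Kronecker
open scoped ComplexOrder

noncomputable section

abbrev M2 : Type := Matrix (Fin 2) (Fin 2) ℂ
abbrev M4 : Type := Matrix (Fin 2 × Fin 2) (Fin 2 × Fin 2) ℂ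

/-- Pauli X matrix. -/
def σx : M2 := !![0, 1; 1, 0]
/-- Pauli Y matrix. -/
def σy : M2 := !![0, -Complex.I; Complex.I, 0]
/-- Pauli Z matrix. -/
def σz : M2 := !![1, 0; 0, -1]

def X1 : M4 := σx ⊗ₖ (1 : M2)
def Z1 : M4 := σz ⊗ₖ (1 : M2)
def Z2 : M4 := (1 : M2) ⊗ₖ σz
def Y2 : M4 := (1 : M2) ⊗ₖ σy
def XX : M4 := σx ⊗ₖ σx

def H1m (k h : ℝ) : M4 := (h : ℂ) • Z1 + ((h ^ 2 / Real.sqrt (h ^ 2 + k ^ 2) : ℝ) : ℂ) • (1 : M4)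
def H2m (k h : ℝ) : M4 := (h : ℂ) • Z2 + ((h ^ 2 / Real.sqrt (h ^ 2 + k ^ 2) : ℝ) : ℂ) • (1 : M4)
def Vm (k h : ℝ) : M4 :=
  ((2 * k : ℝ) : ℂ) • XX + ((2 * k ^ 2 / Real.sqrt (h ^ 2 + k ^ 2) : ℝ) : ℂ) • (1 : M4)
def Hm (k h : ℝ) : M4 := H1m k h + H2m k h + Vm k h

def e00 : (Fin 2 × Fin 2) → ℂ := fun p => if p = (0, 0) then 1 else 0
def e11 : (Fin 2 × Fin 2) → ℂ := fun p => if p = (1, 1) then 1 else 0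

/-- the ground state of the minimal QET Hamiltonian -/
def gs (k h : ℝ) : (Fin 2 × Fin 2) → ℂ := fun p =>
  ((1 / Real.sqrt 2 * Real.sqrt (1 - h / Real.sqrt (h ^ 2 + k ^ 2)) : ℝ) : ℂ) * e00 p
  - ((1 / Real.sqrt 2 * Real.sqrt (1 + h / Real.sqrt (h ^ 2 + k ^ 2)) : ℝ) : ℂ) * e11 p

/-- the rank-one operator |g⟩⟨g| -/
def gProj (k h : ℝ) : M4 := Matrix.vecMulVec (gs k h) (star (gs k h))

/-- Alice's projective measurement operator -/
def PA (μ : ℝ) : M4 := (2 : ℂ)⁻¹ • ((1 : M4) + (μ : ℂ) • X1)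

/-- Bob's conditional unitary -/
def UB (ν θ : ℝ) : M4 :=
  ((Real.cos θ : ℝ) : ℂ) • (1 : M4) - ((Complex.I * ν * Real.sin θ) : ℂ) • Y2

/-- the post-protocol state -/
def ρQET (k h θ : ℝ) : M4 :=
  UB (-1) θ * PA (-1) * gProj k h * PA (-1) * (UB (-1) θ)ᴴ
  + UB 1 θ * PA 1 * gProj k h * PA 1 * (UB 1 θ)ᴴ

/-- the normalized post-measurement state with prover outcome μ and verifier operation UB ν θ -/
def ρMN (k h μ ν θ : ℝ) : M4 := (2 : ℂ) • (UB ν θ * PA μ * gProj k h * PA μ * (UB ν θ)ᴴ)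

/-!
In the Heisenberg picture Bob's rotation `U_B(ν,θ) = exp(-iνθ Y₂)` turns `Z₂` into
`cos 2θ · Z₂ - ν sin 2θ · X₂`, while Alice's projector lives on the first qubit, commutes with
everything on the second one and is idempotent. Hence `Tr[ρ(μ,ν,θ) H₂]` only involves the
correlations `⟨Z₂⟩ = -h/r` and `⟨X₁X₂⟩ = -k/r` of the ground state and equals
`(h/r) (h - h cos 2θ + μν k sin 2θ)`. At the optimal angle, with
`S = √((h²+2k²)² + (hk)²)`, this is `(h²/(rS)) (S - (h²+2k²) + μν k²)`, and
`h² + k² < S < h² + 3k²` fixes both signs.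
-/

def uB (ν θ : ℝ) : M2 :=
  ((Real.cos θ : ℝ) : ℂ) • (1 : M2) - ((Complex.I * ν * Real.sin θ) : ℂ) • σy

def pA (μ : ℝ) : M2 := (2 : ℂ)⁻¹ • ((1 : M2) + (μ : ℂ) • σx)

lemma UB_eq_one_kronecker (ν θ : ℝ) : UB ν θ = (1 : M2) ⊗ₖ uB ν θ := by
  simp only [UB, uB, Y2, sub_eq_add_neg, ← neg_smul, kronecker_add, kronecker_smul,
    one_kronecker_one]

lemma PA_eq_kronecker_one (μ : ℝ) : PA μ = pA μ ⊗ₖ (1 : M2) := by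
  simp only [PA, pA, X1, smul_kronecker, add_kronecker, one_kronecker_one]

lemma H2m_eq_one_kronecker (k h : ℝ) :
    H2m k h = (1 : M2) ⊗ₖ ((h : ℂ) • σz + ((h ^ 2 / Real.sqrt (h ^ 2 + k ^ 2) : ℝ) : ℂ) • 1) := by
  simp only [H2m, Z2, kronecker_add, kronecker_smul, one_kronecker_one]

lemma σx_mul_self : σx * σx = 1 := by
  ext i j; fin_cases i <;> fin_cases j <;> simp [σx]

lemma pA_mul_self {μ : ℝ} (hμ : μ ^ 2 = 1) : pA μ * pA μ = pA μ := by
  have hμ' : (μ : ℂ) * μ = 1 := by exact_mod_cast (sq μ ▸ hμ)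
  simp only [pA, smul_mul_smul, add_mul, mul_add, one_mul, mul_one, σx_mul_self, hμ']
  module

lemma uB_eq_rotation (ν θ : ℝ) :
    uB ν θ = !![(Real.cos θ : ℂ), -(ν * Real.sin θ); ν * Real.sin θ, Real.cos θ] := by
  ext i j; fin_cases i <;> fin_cases j <;> simp [uB, σy] <;> grind [Complex.I_mul_I]

lemma uB_conjTranspose_mul_self {ν : ℝ} (hν : ν ^ 2 = 1) (θ : ℝ) : (uB ν θ)ᴴ * uB ν θ = 1 := by
  have pyth : (Real.cos θ : ℂ) ^ 2 + (Real.sin θ : ℂ) ^ 2 = 1 := by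
    exact_mod_cast Real.cos_sq_add_sin_sq θ
  have hν' : (ν : ℂ) ^ 2 = 1 := by exact_mod_cast hν
  ext i j; fin_cases i <;> fin_cases j <;>
    simp [uB_eq_rotation, Matrix.mul_apply, -Complex.ofReal_cos, -Complex.ofReal_sin] <;> grind

lemma uB_conjTranspose_mul_σz_mul {ν : ℝ} (hν : ν ^ 2 = 1) (θ : ℝ) :
    (uB ν θ)ᴴ * σz * uB ν θ =
      ((Real.cos (2 * θ) : ℝ) : ℂ) • σz - ((ν * Real.sin (2 * θ) : ℝ) : ℂ) • σx := by
  have hν' : (ν : ℂ) ^ 2 = 1 := by exact_mod_cast hν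
  ext i j; fin_cases i <;> fin_cases j <;>
    simp [uB_eq_rotation, σz, σx, Matrix.mul_apply, Real.cos_two_mul', Real.sin_two_mul,
      -Complex.ofReal_cos, -Complex.ofReal_sin] <;> grind

lemma uB_conjTranspose_mul_smul_σz_add_smul_one_mul {ν : ℝ} (hν : ν ^ 2 = 1) (θ : ℝ) (a c : ℂ) :
    (uB ν θ)ᴴ * (a • σz + c • 1) * uB ν θ =
      a • (((Real.cos (2 * θ) : ℝ) : ℂ) • σz - ((ν * Real.sin (2 * θ) : ℝ) : ℂ) • σx) + c • 1 := by
  rw [← uB_conjTranspose_mul_σz_mul hν]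
  simp only [Matrix.mul_add, Matrix.add_mul, Matrix.mul_smul, Matrix.smul_mul, Matrix.mul_one,
    uB_conjTranspose_mul_self hν]

lemma trace_ρMN_mul (k h μ ν θ : ℝ) (H : M4) :
    (ρMN k h μ ν θ * H).trace =
      2 * (gProj k h * (PA μ * (UB ν θ)ᴴ * H * UB ν θ * PA μ)).trace := by
  have cycle := trace_mul_comm (UB ν θ * PA μ) (gProj k h * PA μ * (UB ν θ)ᴴ * H)
  simp only [mul_assoc] at cycle
  simp only [ρMN, Matrix.smul_mul, trace_smul, smul_eq_mul, mul_assoc, cycle]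

lemma PA_mul_UB_conj_H2m_mul_PA {μ ν : ℝ} (hμ : μ ^ 2 = 1) (hν : ν ^ 2 = 1) (k h θ : ℝ) :
    PA μ * (UB ν θ)ᴴ * H2m k h * UB ν θ * PA μ =
      pA μ ⊗ₖ ((h : ℂ) • (((Real.cos (2 * θ) : ℝ) : ℂ) • σz - ((ν * Real.sin (2 * θ) : ℝ) : ℂ) • σx)
        + ((h ^ 2 / Real.sqrt (h ^ 2 + k ^ 2) : ℝ) : ℂ) • 1) := by
  rw [PA_eq_kronecker_one, UB_eq_one_kronecker, H2m_eq_one_kronecker, conjTranspose_kronecker,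
    conjTranspose_one]
  simp only [← mul_kronecker_mul, Matrix.mul_one, Matrix.one_mul, pA_mul_self hμ,
    uB_conjTranspose_mul_smul_σz_add_smul_one_mul hν]

def gsCoeff00 (k h : ℝ) : ℝ := 1 / Real.sqrt 2 * Real.sqrt (1 - h / Real.sqrt (h ^ 2 + k ^ 2))

def gsCoeff11 (k h : ℝ) : ℝ := 1 / Real.sqrt 2 * Real.sqrt (1 + h / Real.sqrt (h ^ 2 + k ^ 2))

lemma trace_gProj_mul_kronecker (k h : ℝ) (A B : M2) :
    (gProj k h * (A ⊗ₖ B)).trace =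
      (gsCoeff00 k h : ℂ) ^ 2 * (A 0 0 * B 0 0)
        - gsCoeff00 k h * gsCoeff11 k h * (A 0 1 * B 0 1 + A 1 0 * B 1 0)
        + (gsCoeff11 k h : ℂ) ^ 2 * (A 1 1 * B 1 1) := by
  rw [gProj, vecMulVec_mul, trace_vecMulVec]
  simp [dotProduct, vecMul, Fintype.sum_prod_type, gs, e00, e11, gsCoeff00, gsCoeff11]
  ring

lemma abs_div_sqrt_sq_add_sq_le_one (h k : ℝ) : |h / Real.sqrt (h ^ 2 + k ^ 2)| ≤ 1 := by
  rw [abs_div, abs_of_nonneg (Real.sqrt_nonneg _)]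
  exact div_le_one_of_le₀ (Real.abs_le_sqrt (by nlinarith [sq_nonneg k])) (Real.sqrt_nonneg _)

lemma gsCoeff_sq (k h : ℝ) :
    gsCoeff00 k h ^ 2 = (1 - h / Real.sqrt (h ^ 2 + k ^ 2)) / 2 ∧
      gsCoeff11 k h ^ 2 = (1 + h / Real.sqrt (h ^ 2 + k ^ 2)) / 2 := by
  obtain ⟨hlo, hhi⟩ := abs_le.1 (abs_div_sqrt_sq_add_sq_le_one h k)
  simp only [gsCoeff00, gsCoeff11, mul_pow, div_pow, one_pow]
  rw [Real.sq_sqrt zero_le_two, Real.sq_sqrt (by linarith), Real.sq_sqrt (by linarith)]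
  constructor <;> ring

lemma two_mul_gsCoeff00_mul_gsCoeff11 {k : ℝ} (hk : k ≠ 0) (h : ℝ) :
    2 * gsCoeff00 k h * gsCoeff11 k h = |k| / Real.sqrt (h ^ 2 + k ^ 2) := by
  have hr : Real.sqrt (h ^ 2 + k ^ 2) ≠ 0 := (Real.sqrt_pos.2 (by positivity)).ne'
  have hsq : Real.sqrt (h ^ 2 + k ^ 2) ^ 2 = h ^ 2 + k ^ 2 := Real.sq_sqrt (by positivity)
  obtain ⟨-, hhi⟩ := abs_le.1 (abs_div_sqrt_sq_add_sq_le_one h k)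
  have hprod : (1 - h / Real.sqrt (h ^ 2 + k ^ 2)) * (1 + h / Real.sqrt (h ^ 2 + k ^ 2))
      = (k / Real.sqrt (h ^ 2 + k ^ 2)) ^ 2 := by
    field_simp
    linear_combination hsq
  calc 2 * gsCoeff00 k h * gsCoeff11 k h
      = 2 * (1 / Real.sqrt 2) ^ 2 * Real.sqrt ((1 - h / Real.sqrt (h ^ 2 + k ^ 2)) *
          (1 + h / Real.sqrt (h ^ 2 + k ^ 2))) := by
        rw [Real.sqrt_mul (by linarith), gsCoeff00, gsCoeff11]; ring
    _ = |k| / Real.sqrt (h ^ 2 + k ^ 2) := by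
        rw [hprod, Real.sqrt_sq_eq_abs, abs_div, abs_of_nonneg (Real.sqrt_nonneg _), div_pow,
          Real.sq_sqrt zero_le_two]
        ring

lemma trace_ρMN_mul_H2m {k : ℝ} (hk : k ≠ 0) {μ ν : ℝ} (hμ : μ ^ 2 = 1) (hν : ν ^ 2 = 1)
    (h θ : ℝ) :
    (ρMN k h μ ν θ * H2m k h).trace =
      ((h / Real.sqrt (h ^ 2 + k ^ 2) *
        (h - h * Real.cos (2 * θ) + μ * ν * |k| * Real.sin (2 * θ)) : ℝ) : ℂ) := by
  obtain ⟨h00, h11⟩ := gsCoeff_sq k h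
  have h01 := two_mul_gsCoeff00_mul_gsCoeff11 hk h
  apply_fun ((↑) : ℝ → ℂ) at h00 h11 h01
  push_cast at h00 h11 h01 ⊢
  rw [trace_ρMN_mul, PA_mul_UB_conj_H2m_mul_PA hμ hν, trace_gProj_mul_kronecker]
  simp [pA, σx, σz]
  linear_combination (h * Complex.cos (2 * θ) + h ^ 2 / Real.sqrt (h ^ 2 + k ^ 2)) * h00
    + (-h * Complex.cos (2 * θ) + h ^ 2 / Real.sqrt (h ^ 2 + k ^ 2)) * h11
    + μ * ν * h * Complex.sin (2 * θ) * h01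

lemma sub_mul_optimal_add_mul_optimal {k : ℝ} (hk : k ≠ 0) (h s : ℝ) :
    h - h * ((h ^ 2 + 2 * k ^ 2) / Real.sqrt ((h ^ 2 + 2 * k ^ 2) ^ 2 + (h * k) ^ 2))
        + s * k * (h * k / Real.sqrt ((h ^ 2 + 2 * k ^ 2) ^ 2 + (h * k) ^ 2)) =
      h / Real.sqrt ((h ^ 2 + 2 * k ^ 2) ^ 2 + (h * k) ^ 2) *
        (Real.sqrt ((h ^ 2 + 2 * k ^ 2) ^ 2 + (h * k) ^ 2) - (h ^ 2 + 2 * k ^ 2) + s * k ^ 2) := by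
  have hS : Real.sqrt ((h ^ 2 + 2 * k ^ 2) ^ 2 + (h * k) ^ 2) ≠ 0 :=
    (Real.sqrt_pos.2 (by positivity)).ne'
  field_simp

section OptimalAngle

variable {k h : ℝ} (hk : 0 < k) (hh : 0 < h)
include hk hh

lemma sq_add_sq_lt_sqrt_optimal :
    h ^ 2 + k ^ 2 < Real.sqrt ((h ^ 2 + 2 * k ^ 2) ^ 2 + (h * k) ^ 2) :=
  (Real.lt_sqrt (by positivity)).2
    (by nlinarith [mul_pos (pow_pos hh 2) (pow_pos hk 2), pow_pos hk 4])

lemma sqrt_optimal_lt :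
    Real.sqrt ((h ^ 2 + 2 * k ^ 2) ^ 2 + (h * k) ^ 2) < h ^ 2 + 3 * k ^ 2 :=
  (Real.sqrt_lt' (by positivity)).2
    (by nlinarith [mul_pos (pow_pos hh 2) (pow_pos hk 2), pow_pos hk 4])

end OptimalAngle

/-- State distinguishability via the single-qubit Hamiltonian: at the
QET-optimal angle, `Tr[ρ(μ,μ,θ)·H₂] > 0` (faithful) and `Tr[ρ(μ,−μ,θ)·H₂] < 0`
(non-faithful). -/
theorem qet_distinguish_H2 (k h : ℝ) (hk : 0 < k) (hh : 0 < h) (θ : ℝ)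
    (hcos : Real.cos (2 * θ) =
      (h ^ 2 + 2 * k ^ 2) / Real.sqrt ((h ^ 2 + 2 * k ^ 2) ^ 2 + (h * k) ^ 2))
    (hsin : Real.sin (2 * θ) =
      h * k / Real.sqrt ((h ^ 2 + 2 * k ^ 2) ^ 2 + (h * k) ^ 2)) :
    ∀ μ ∈ ({-1, 1} : Set ℝ),
      0 < (ρMN k h μ μ θ * H2m k h).trace ∧
      (ρMN k h μ (-μ) θ * H2m k h).trace < 0 := by
  intro μ hμ
  have hμ2 : μ ^ 2 = 1 := by rcases hμ with rfl | rfl <;> norm_num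
  have hr : 0 < Real.sqrt (h ^ 2 + k ^ 2) := Real.sqrt_pos.2 (by positivity)
  have hS : 0 < Real.sqrt ((h ^ 2 + 2 * k ^ 2) ^ 2 + (h * k) ^ 2) :=
    Real.sqrt_pos.2 (by positivity)
  rw [trace_ρMN_mul_H2m hk.ne' hμ2 hμ2, trace_ρMN_mul_H2m hk.ne' hμ2 (by rwa [neg_sq]),
    hcos, hsin, abs_of_pos hk, mul_neg, ← sq, hμ2, sub_mul_optimal_add_mul_optimal hk.ne' h,
    sub_mul_optimal_add_mul_optimal hk.ne' h]
  constructor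
  · refine Complex.zero_lt_real.2 (mul_pos (div_pos hh hr) (mul_pos (div_pos hh hS) ?_))
    linarith [sq_add_sq_lt_sqrt_optimal hk hh]
  · rw [← Complex.ofReal_zero, Complex.real_lt_real]
    refine mul_neg_of_pos_of_neg (div_pos hh hr) (mul_neg_of_pos_of_neg (div_pos hh hS) ?_)
    linarith [sqrt_optimal_lt hk hh]
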